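/- Let F : ℝ → ℝ be smooth and define, on the open set of points (t, x₁, v₁, x₂, v₂) ∈ ℝ⁵ with x₁ ≠ 0 and x₂ ≠ 0, the function I(t, x₁, v₁, x₂, v₂) = e^{2F(t)}(x₁v₂ − x₂v₁)² + (x₁/x₂)² + (x₂/x₁)². Then: (i) ∂I/∂t + ∑_{a=1}^{2} [ v_a ∂I/∂x_a + (−F'(t)v_a + e^{−2F(t)}x_a^{−3} + x_a) ∂I/∂v_a ] = 0, and (ii) x₁ ∂I/∂v₁ + x₂ ∂I/∂v₂ = 0, at every such point. Consequently, I is a common first integral of the time-prolongations X̃_ω of all the time-dependent vector fields Y_ω = v∂/∂x + (−F'v + e^{−2F}x^{−3} + ω²x)∂/∂v associated with the family of dissipative Milne–Pinney equations ẍ = −F'ẋ + ω²x + e^{−2F}x^{−3}. -/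

import Mathlib

/-!
The prolongations satisfy `X̃_ω = X̃_1 + (ω² − 1)(x₁ ∂/∂v₁ + x₂ ∂/∂v₂)`, so it suffices that
`X̃_1` and `x₁ ∂/∂v₁ + x₂ ∂/∂v₂` both annihilate `I`. Both are direct computations
from the explicit gradient of `I`: with `W = x₁v₂ − x₂v₁`, the second field kills `W` and the
ratios `x₁/x₂`, while along `X̃_1` the friction terms `−F'v_a` cancel the derivative of `e^{2F}`
and the terms `e^{−2F}x_a^{−3}` cancel the contribution of the ratios.
-/

/-- `I(t, x₁, v₁, x₂, v₂) = e^{2F(t)}(x₁v₂ − x₂v₁)² + (x₁/x₂)² + (x₂/x₁)²`, on `ℝ⁵` with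
coordinates `(t, x₁, v₁, x₂, v₂)` indexed `0,…,4`. -/
noncomputable def mpI (F : ℝ → ℝ) : (Fin 5 → ℝ) → ℝ := fun p =>
  Real.exp (2 * F (p 0)) * (p 1 * p 4 - p 3 * p 2) ^ 2
    + (p 1 / p 3) ^ 2 + (p 3 / p 1) ^ 2

noncomputable def mpIGrad (F : ℝ → ℝ) (p : Fin 5 → ℝ) : Fin 5 → ℝ :=
  let E := Real.exp (2 * F (p 0))
  let W := p 1 * p 4 - p 3 * p 2
  ![2 * deriv F (p 0) * E * W ^ 2,
    2 * E * W * p 4 + 2 * p 1 / p 3 ^ 2 - 2 * p 3 ^ 2 / p 1 ^ 3,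
    -(2 * E * W * p 3),
    -(2 * E * W * p 2) - 2 * p 1 ^ 2 / p 3 ^ 3 + 2 * p 3 / p 1 ^ 2,
    2 * E * W * p 1]

theorem fderiv_mpI_single {F : ℝ → ℝ} {p : Fin 5 → ℝ} (hF : DifferentiableAt ℝ F (p 0))
    (h1 : p 1 ≠ 0) (h3 : p 3 ≠ 0) (i : Fin 5) :
    fderiv ℝ (mpI F) p (Pi.single i 1) = mpIGrad F p i := by
  have hx (j : Fin 5) := hasFDerivAt_apply (𝕜 := ℝ) j p
  have hquot {j k : Fin 5} (hk : p k ≠ 0) :=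
    (hx j).mul ((hasDerivAt_inv hk).comp_hasFDerivAt p (hx k))
  have hE := ((hF.hasDerivAt.comp_hasFDerivAt p (hx 0)).const_mul 2).exp
  have hW := ((hx 1).mul (hx 4)).sub ((hx 3).mul (hx 2))
  have hI := ((hE.mul (hW.pow 2)).add ((hquot (j := 1) h3).pow 2)).add
    ((hquot (j := 3) h1).pow 2)
  rw [(hI.congr_of_eventuallyEq (.of_forall fun q => by simp [mpI, div_eq_mul_inv])).fderiv]
  simp only [add_apply, sub_apply, smul_apply, ContinuousLinearMap.proj_apply, Function.comp_apply,
    Pi.mul_apply, Pi.sub_apply, Pi.single_apply, smul_eq_mul, nsmul_eq_mul, Nat.add_one_sub_one,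
    pow_one, Nat.cast_ofNat]
  fin_cases i <;>
    simp only [mpIGrad, Fin.reduceFinMk, Fin.isValue, Fin.reduceEq, Matrix.cons_val, if_true,
      if_false, mul_zero, mul_one, add_zero, zero_add, sub_zero, zero_sub] <;>
    field_simp <;> ring

theorem mpIGrad_vertical (F : ℝ → ℝ) (p : Fin 5 → ℝ) :
    p 1 * mpIGrad F p 2 + p 3 * mpIGrad F p 4 = 0 := by
  simp only [mpIGrad, Fin.isValue, Matrix.cons_val, mul_neg]
  ring

theorem mpIGrad_prolongation (F : ℝ → ℝ) {p : Fin 5 → ℝ} (h1 : p 1 ≠ 0) (h3 : p 3 ≠ 0) :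
    mpIGrad F p 0
      + (p 2 * mpIGrad F p 1
        + (-(deriv F (p 0)) * p 2 + Real.exp (-(2 * F (p 0))) * ((p 1) ^ 3)⁻¹ + p 1)
          * mpIGrad F p 2)
      + (p 4 * mpIGrad F p 3
        + (-(deriv F (p 0)) * p 4 + Real.exp (-(2 * F (p 0))) * ((p 3) ^ 3)⁻¹ + p 3)
          * mpIGrad F p 4) = 0 := by
  simp only [mpIGrad, Fin.isValue, Matrix.cons_val_zero, Matrix.cons_val_one, Matrix.cons_val,
    Real.exp_neg]
  field_simp
  ring

/-- For smooth `F`, the function `I = e^{2F(t)}(x₁v₂ − x₂v₁)² + (x₁/x₂)² + (x₂/x₁)²`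
satisfies, at every point with `x₁ ≠ 0` and `x₂ ≠ 0`:
(i) `∂I/∂t + ∑_{a=1,2} [v_a ∂I/∂x_a + (−F'v_a + e^{−2F}x_a^{−3} + x_a) ∂I/∂v_a] = 0`;
(ii) `x₁ ∂I/∂v₁ + x₂ ∂I/∂v₂ = 0`; and consequently, for every `ω : ℝ → ℝ`,
`∂I/∂t + ∑_{a=1,2} [v_a ∂I/∂x_a + (−F'v_a + e^{−2F}x_a^{−3} + ω²x_a) ∂I/∂v_a] = 0`,
i.e. `I` is a common first integral of the time-prolongations `X̃_ω` of all the
time-dependent vector fields `Y_ω = v∂/∂x + (−F'v + e^{−2F}x^{−3} + ω²x)∂/∂v` associated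
with the family of dissipative Milne–Pinney equations `ẍ = −F'ẋ + ω²x + e^{−2F}x^{−3}`. -/
theorem mpI_first_integral (F : ℝ → ℝ) (hF : ContDiff ℝ (⊤ : ℕ∞) F) :
    ∀ p : Fin 5 → ℝ, p 1 ≠ 0 → p 3 ≠ 0 →
      (fderiv ℝ (mpI F) p (Pi.single 0 1)
          + (p 2 * fderiv ℝ (mpI F) p (Pi.single 1 1)
            + (-(deriv F (p 0)) * p 2 + Real.exp (-(2 * F (p 0))) * ((p 1) ^ 3)⁻¹ + p 1)
              * fderiv ℝ (mpI F) p (Pi.single 2 1))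
          + (p 4 * fderiv ℝ (mpI F) p (Pi.single 3 1)
            + (-(deriv F (p 0)) * p 4 + Real.exp (-(2 * F (p 0))) * ((p 3) ^ 3)⁻¹ + p 3)
              * fderiv ℝ (mpI F) p (Pi.single 4 1)) = 0)
      ∧ (p 1 * fderiv ℝ (mpI F) p (Pi.single 2 1)
          + p 3 * fderiv ℝ (mpI F) p (Pi.single 4 1) = 0)
      ∧ (∀ ω : ℝ → ℝ,
          fderiv ℝ (mpI F) p (Pi.single 0 1)
            + (p 2 * fderiv ℝ (mpI F) p (Pi.single 1 1)
              + (-(deriv F (p 0)) * p 2 + Real.exp (-(2 * F (p 0))) * ((p 1) ^ 3)⁻¹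
                  + (ω (p 0)) ^ 2 * p 1)
                * fderiv ℝ (mpI F) p (Pi.single 2 1))
            + (p 4 * fderiv ℝ (mpI F) p (Pi.single 3 1)
              + (-(deriv F (p 0)) * p 4 + Real.exp (-(2 * F (p 0))) * ((p 3) ^ 3)⁻¹
                  + (ω (p 0)) ^ 2 * p 3)
                * fderiv ℝ (mpI F) p (Pi.single 4 1)) = 0) := by
  intro p h1 h3
  simp only [fderiv_mpI_single (hF.differentiable (by simp) (p 0)) h1 h3]
  have hX₁ := mpIGrad_prolongation F h1 h3
  have hV := mpIGrad_vertical F p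
  exact ⟨hX₁, hV, fun ω => by linear_combination hX₁ + (ω (p 0) ^ 2 - 1) * hV⟩
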